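/- Let L be a real symmetric positive semidefinite n×n matrix, let κ > 0, and set M = (1/(2n))·I + (1/(2κ))·L. Let ε be uniform on {−1,+1}^n. Then E_ε [ max { ⟨w, ε⟩ : w ∈ [−1,1]^n, wᵀ L w ≤ κ } ] ≤ √( Σ_{j=1}^n λ_j(M)^{−1} ), where λ_1(M),…,λ_n(M) are the eigenvalues of M; equivalently, with F′_κ = {w ∈ [−1,1]^n : wᵀ L w ≤ κ}, one has 2n·Rad(F′_κ) ≤ √(tr(M^{−1})). -/

import Mathlib

open Matrix Finset

noncomputable section

/-- The real ±1 value of a Boolean bit (`true ↦ +1`, `false ↦ -1`). -/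
def sgn (b : Bool) : ℝ := if b then 1 else -1

lemma sgn_mul_self (b : Bool) : sgn b * sgn b = 1 := by cases b <;> simp [sgn]

lemma sgn_not (b : Bool) : sgn (!b) = -sgn b := by cases b <;> simp [sgn]

open scoped MatrixOrder in
/-- Generalized Cauchy–Schwarz through a positive definite matrix. -/
lemma cs_dot {n : ℕ} {M : Matrix (Fin n) (Fin n) ℝ} (hM : M.PosDef) (w u : Fin n → ℝ) :
    w ⬝ᵥ u ≤ Real.sqrt (w ⬝ᵥ M.mulVec w) * Real.sqrt (u ⬝ᵥ M⁻¹.mulVec u) := by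
  have hpsd := hM.posSemidef
  set S := CFC.sqrt M with hSdef
  have hSS : S * S = M := CFC.sqrt_mul_sqrt_self M hpsd.nonneg
  have hSsym : Sᵀ = S := by
    have h := (CFC.sqrt_nonneg M).posSemidef.isHermitian
    rwa [Matrix.IsHermitian, conjTranspose_eq_transpose_of_trivial] at h
  have hdet : IsUnit S.det := by
    refine isUnit_iff_ne_zero.2 fun h0 => ?_
    have h : S.det * S.det = M.det := by rw [← Matrix.det_mul, hSS]
    rw [h0, mul_zero] at h
    exact hM.det_pos.ne' h.symm
  have hSinvT : S⁻¹ᵀ = S⁻¹ := by rw [transpose_nonsing_inv, hSsym]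
  have hMinv : S⁻¹ * S⁻¹ = M⁻¹ := by rw [← Matrix.mul_inv_rev, hSS]
  have key1 : (S *ᵥ w) ⬝ᵥ (S⁻¹ *ᵥ u) = w ⬝ᵥ u := by
    rw [dotProduct_comm (S *ᵥ w) (S⁻¹ *ᵥ u), dotProduct_mulVec, ← mulVec_transpose, hSsym,
      mulVec_mulVec, Matrix.mul_nonsing_inv _ hdet, one_mulVec, dotProduct_comm]
  have key2 : (S *ᵥ w) ⬝ᵥ (S *ᵥ w) = w ⬝ᵥ M *ᵥ w := by
    rw [dotProduct_mulVec, ← mulVec_transpose, hSsym, mulVec_mulVec, hSS, dotProduct_comm]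
  have key3 : (S⁻¹ *ᵥ u) ⬝ᵥ (S⁻¹ *ᵥ u) = u ⬝ᵥ M⁻¹ *ᵥ u := by
    rw [dotProduct_mulVec, ← mulVec_transpose, hSinvT, mulVec_mulVec, hMinv, dotProduct_comm]
  calc w ⬝ᵥ u = (S *ᵥ w) ⬝ᵥ (S⁻¹ *ᵥ u) := key1.symm
    _ ≤ Real.sqrt (∑ i, (S *ᵥ w) i ^ 2) * Real.sqrt (∑ i, (S⁻¹ *ᵥ u) i ^ 2) :=
        Real.sum_mul_le_sqrt_mul_sqrt _ _ _
    _ = Real.sqrt ((S *ᵥ w) ⬝ᵥ (S *ᵥ w)) * Real.sqrt ((S⁻¹ *ᵥ u) ⬝ᵥ (S⁻¹ *ᵥ u)) := by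
        simp [dotProduct, sq]
    _ = Real.sqrt (w ⬝ᵥ M *ᵥ w) * Real.sqrt (u ⬝ᵥ M⁻¹ *ᵥ u) := by rw [key2, key3]

/-- Orthogonality of distinct Rademacher coordinates. -/
lemma sgn_orth {n : ℕ} {i j : Fin n} (hij : i ≠ j) :
    ∑ ε : Fin n → Bool, sgn (ε i) * sgn (ε j) = 0 := by
  refine Finset.sum_ninvolution (fun ε => Function.update ε i (!(ε i))) ?_ ?_
    (fun _ => Finset.mem_univ _) ?_
  · intro ε
    simp only [Function.update_self, Function.update_of_ne hij.symm, sgn_not]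
    ring
  · intro ε _ h
    have h2 := congrFun h i
    simp [Function.update_self] at h2
  · intro ε
    funext t
    by_cases ht : t = i
    · subst ht
      simp [Function.update_self]
    · simp [Function.update_of_ne ht]

/-- Second-moment computation: the expected quadratic form of a Rademacher vector is the trace. -/
lemma sum_sgn_sq {n : ℕ} (A : Matrix (Fin n) (Fin n) ℝ) :
    ∑ ε : Fin n → Bool, (fun t => sgn (ε t)) ⬝ᵥ A *ᵥ (fun t => sgn (ε t))
      = 2 ^ n * A.trace := by
  simp only [dotProduct, Matrix.mulVec, Finset.mul_sum]
  rw [Finset.sum_comm]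
  have key : ∀ i : Fin n, ∑ ε : Fin n → Bool, ∑ j : Fin n, sgn (ε i) * (A i j * sgn (ε j))
      = 2 ^ n * A i i := by
    intro i
    rw [Finset.sum_comm]
    have hsplit : ∀ j : Fin n, ∑ ε : Fin n → Bool, sgn (ε i) * (A i j * sgn (ε j))
        = A i j * ∑ ε : Fin n → Bool, sgn (ε i) * sgn (ε j) := by
      intro j
      rw [Finset.mul_sum]
      exact Finset.sum_congr rfl fun ε _ => by ring
    rw [Finset.sum_congr rfl fun j _ => hsplit j]
    rw [Finset.sum_eq_single i]
    · simp only [sgn_mul_self]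
      rw [Finset.sum_const]
      simp [Fintype.card_fun, mul_comm]
    · intro j _ hji
      rw [sgn_orth hji.symm, mul_zero]
    · intro h; exact absurd (Finset.mem_univ i) h
  rw [Finset.sum_congr rfl fun i _ => key i, ← Finset.mul_sum, Matrix.trace]
  rfl

/-- for `L` symmetric PSD, `κ > 0` and `M = (1/(2n))·I + (1/(2κ))·L`, the expected
(over uniform `ε ∈ {−1,+1}^n`) supremum of `⟨w,ε⟩` over
`F′_κ = {w ∈ [−1,1]^n : wᵀ L w ≤ κ}` is at most `√(Σ_j λ_j(M)^{-1}) = √(tr(M⁻¹))`;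
i.e. `2n·Rad(F′_κ) ≤ √(tr(M⁻¹))`. -/
theorem rad_ellipsoid_bound (n : ℕ) (L : Matrix (Fin n) (Fin n) ℝ)
    (hsym : L.IsSymm) (hpsd : L.PosSemidef) (κ : ℝ) (hκ : 0 < κ)
    (M : Matrix (Fin n) (Fin n) ℝ)
    (hM : M = ((1 : ℝ) / (2 * n)) • (1 : Matrix (Fin n) (Fin n) ℝ) + ((1 : ℝ) / (2 * κ)) • L) :
    (∑ ε : Fin n → Bool,
        sSup ((fun w : Fin n → ℝ => ∑ t : Fin n, w t * sgn (ε t)) ''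
          {w : Fin n → ℝ | (∀ t : Fin n, |w t| ≤ 1) ∧ w ⬝ᵥ L.mulVec w ≤ κ})) / 2 ^ n
      ≤ Real.sqrt (M⁻¹.trace) := by
  have hzero : (0 : Fin n → ℝ) ∈
      {w : Fin n → ℝ | (∀ t : Fin n, |w t| ≤ 1) ∧ w ⬝ᵥ L.mulVec w ≤ κ} := by
    constructor
    · intro t; simp
    · simp [hκ.le]
  rcases Nat.eq_zero_or_pos n with hn | hn
  · subst hn
    have himg : ∀ ε : Fin 0 → Bool,
        ((fun w : Fin 0 → ℝ => ∑ t : Fin 0, w t * sgn (ε t)) ''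
          {w : Fin 0 → ℝ | (∀ t : Fin 0, |w t| ≤ 1) ∧ w ⬝ᵥ L.mulVec w ≤ κ}) = {0} := by
      intro ε
      apply Set.eq_singleton_iff_nonempty_unique_mem.2
      refine ⟨⟨0, Set.mem_image_of_mem _ hzero⟩, ?_⟩
      rintro x ⟨w, _, rfl⟩
      simp
    simp only [himg, csSup_singleton]
    simp
  -- main case: n ≥ 1
  have hnR : (0 : ℝ) < n := by exact_mod_cast hn
  have hMpd : M.PosDef := by
    rw [hM]
    refine Matrix.PosDef.add_posSemidef ?_ ?_
    · refine Matrix.PosDef.of_dotProduct_mulVec_pos ?_ ?_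
      · rw [Matrix.IsHermitian, conjTranspose_eq_transpose_of_trivial]
        simp [Matrix.transpose_smul]
      · intro x hx
        have h1 : (((1 : ℝ) / (2 * n)) • (1 : Matrix (Fin n) (Fin n) ℝ)) *ᵥ x
            = ((1 : ℝ) / (2 * n)) • x := by
          rw [Matrix.smul_mulVec, Matrix.one_mulVec]
        rw [h1, dotProduct_smul]
        have hx2 : 0 < star x ⬝ᵥ x := dotProduct_star_self_pos_iff.mpr hx
        have hc : 0 < (1 : ℝ) / (2 * n) := by positivity
        exact smul_pos hc hx2
    · refine Matrix.PosSemidef.of_dotProduct_mulVec_nonneg ?_ ?_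
      · rw [Matrix.IsHermitian, conjTranspose_eq_transpose_of_trivial,
          Matrix.transpose_smul, hsym]
      · intro x
        rw [Matrix.smul_mulVec, dotProduct_smul]
        have hc : 0 ≤ (1 : ℝ) / (2 * κ) := by positivity
        exact smul_nonneg hc (hpsd.dotProduct_mulVec_nonneg x)
  have hqnn : ∀ ε : Fin n → Bool,
      0 ≤ (fun t => sgn (ε t)) ⬝ᵥ M⁻¹ *ᵥ (fun t => sgn (ε t)) := by
    intro ε
    simpa [star_trivial] using hMpd.inv.posSemidef.dotProduct_mulVec_nonneg (fun t => sgn (ε t))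
  -- bound each sSup
  have hsup : ∀ ε : Fin n → Bool,
      sSup ((fun w : Fin n → ℝ => ∑ t : Fin n, w t * sgn (ε t)) ''
          {w : Fin n → ℝ | (∀ t : Fin n, |w t| ≤ 1) ∧ w ⬝ᵥ L.mulVec w ≤ κ})
        ≤ Real.sqrt ((fun t => sgn (ε t)) ⬝ᵥ M⁻¹ *ᵥ (fun t => sgn (ε t))) := by
    intro ε
    refine csSup_le ⟨_, Set.mem_image_of_mem _ hzero⟩ ?_
    rintro x ⟨w, ⟨hw1, hw2⟩, rfl⟩
    have hwMw : w ⬝ᵥ M *ᵥ w ≤ 1 := by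
      rw [hM, Matrix.add_mulVec, dotProduct_add, Matrix.smul_mulVec,
        Matrix.smul_mulVec, Matrix.one_mulVec, dotProduct_smul,
        dotProduct_smul]
      have h1 : w ⬝ᵥ w ≤ (n : ℝ) := by
        have hterm : ∀ t : Fin n, w t * w t ≤ 1 := by
          intro t
          have := hw1 t
          nlinarith [le_abs_self (w t), neg_abs_le (w t), abs_nonneg (w t)]
        calc w ⬝ᵥ w = ∑ t : Fin n, w t * w t := rfl
          _ ≤ ∑ _t : Fin n, (1 : ℝ) := Finset.sum_le_sum fun t _ => hterm t
          _ = n := by simp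
      have e1 : (1 / (2 * (n : ℝ))) * (w ⬝ᵥ w) ≤ 1 / 2 := by
        have hc : (0 : ℝ) ≤ 1 / (2 * (n : ℝ)) := by positivity
        calc (1 / (2 * (n : ℝ))) * (w ⬝ᵥ w) ≤ (1 / (2 * (n : ℝ))) * n :=
              mul_le_mul_of_nonneg_left h1 hc
          _ = 1 / 2 := by field_simp
      have e2 : (1 / (2 * κ)) * (w ⬝ᵥ L *ᵥ w) ≤ 1 / 2 := by
        have hc : (0 : ℝ) ≤ 1 / (2 * κ) := by positivity
        calc (1 / (2 * κ)) * (w ⬝ᵥ L *ᵥ w) ≤ (1 / (2 * κ)) * κ :=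
              mul_le_mul_of_nonneg_left hw2 hc
          _ = 1 / 2 := by field_simp
      simp only [smul_eq_mul]
      linarith
    show w ⬝ᵥ (fun t => sgn (ε t)) ≤ _
    calc w ⬝ᵥ (fun t => sgn (ε t))
        ≤ Real.sqrt (w ⬝ᵥ M *ᵥ w) *
          Real.sqrt ((fun t => sgn (ε t)) ⬝ᵥ M⁻¹ *ᵥ (fun t => sgn (ε t))) :=
          cs_dot hMpd w _
      _ ≤ 1 * Real.sqrt ((fun t => sgn (ε t)) ⬝ᵥ M⁻¹ *ᵥ (fun t => sgn (ε t))) := by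
          refine mul_le_mul_of_nonneg_right ?_ (Real.sqrt_nonneg _)
          rw [show (1 : ℝ) = Real.sqrt 1 from (Real.sqrt_one).symm]
          exact Real.sqrt_le_sqrt hwMw
      _ = Real.sqrt ((fun t => sgn (ε t)) ⬝ᵥ M⁻¹ *ᵥ (fun t => sgn (ε t))) := one_mul _
  -- sum the bounds
  have h2n : (0 : ℝ) < 2 ^ n := by positivity
  have hq2 : ∑ ε : Fin n → Bool, (fun t => sgn (ε t)) ⬝ᵥ M⁻¹ *ᵥ (fun t => sgn (ε t))
      = 2 ^ n * M⁻¹.trace := sum_sgn_sq M⁻¹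
  have htr : 0 ≤ M⁻¹.trace := by
    have h := hq2 ▸ Finset.sum_nonneg fun ε (_ : ε ∈ Finset.univ) => hqnn ε
    nlinarith [h, h2n]
  have hsum : ∑ ε : Fin n → Bool,
      Real.sqrt ((fun t => sgn (ε t)) ⬝ᵥ M⁻¹ *ᵥ (fun t => sgn (ε t)))
      ≤ 2 ^ n * Real.sqrt (M⁻¹.trace) := by
    have h1 := Real.sum_sqrt_mul_sqrt_le (f := fun ε : Fin n → Bool =>
        (fun t => sgn (ε t)) ⬝ᵥ M⁻¹ *ᵥ (fun t => sgn (ε t)))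
      (g := fun _ => (1 : ℝ)) Finset.univ hqnn (fun _ => zero_le_one)
    simp only [Real.sqrt_one, mul_one] at h1
    have hcard : ∑ _ε : Fin n → Bool, (1 : ℝ) = 2 ^ n := by
      simp [Fintype.card_fun]
    rw [hq2, hcard] at h1
    calc ∑ ε : Fin n → Bool,
          Real.sqrt ((fun t => sgn (ε t)) ⬝ᵥ M⁻¹ *ᵥ (fun t => sgn (ε t)))
        ≤ Real.sqrt (2 ^ n * M⁻¹.trace) * Real.sqrt (2 ^ n) := h1
      _ = (Real.sqrt (2 ^ n) * Real.sqrt (M⁻¹.trace)) * Real.sqrt (2 ^ n) := by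
          rw [Real.sqrt_mul (by positivity)]
      _ = (Real.sqrt (2 ^ n) * Real.sqrt (2 ^ n)) * Real.sqrt (M⁻¹.trace) := by ring
      _ = 2 ^ n * Real.sqrt (M⁻¹.trace) := by rw [Real.mul_self_sqrt h2n.le]
  rw [div_le_iff₀ h2n]
  calc (∑ ε : Fin n → Bool,
        sSup ((fun w : Fin n → ℝ => ∑ t : Fin n, w t * sgn (ε t)) ''
          {w : Fin n → ℝ | (∀ t : Fin n, |w t| ≤ 1) ∧ w ⬝ᵥ L.mulVec w ≤ κ}))
      ≤ ∑ ε : Fin n → Bool,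
          Real.sqrt ((fun t => sgn (ε t)) ⬝ᵥ M⁻¹ *ᵥ (fun t => sgn (ε t))) :=
        Finset.sum_le_sum fun ε _ => hsup ε
    _ ≤ 2 ^ n * Real.sqrt (M⁻¹.trace) := hsum
    _ = Real.sqrt (M⁻¹.trace) * 2 ^ n := mul_comm _ _
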